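/- The cut rule is admissible in Lb*₁: if the sequents Π → A and Δ(A) → C are both derivable in Lb*₁, then the sequent Δ(Π) → C is derivable in Lb*₁. -/
import Mathlib


/-! Formulas of the Lambek calculus with brackets (and the unit constant `one`,
which is used only in the calculus Lb*₁). Variables are indexed by `ℕ`. -/
inductive Fm : Type
  | var : ℕ → Fm            -- variables p₁, p₂, …
  | one : Fm                 -- the unit constant 𝟏
  | ldiv : Fm → Fm → Fm      -- `ldiv A B` is A \ B (left division)
  | rdiv : Fm → Fm → Fm      -- `rdiv B A` is B / A (right division)
  | mul : Fm → Fm → Fm       -- `mul A B` is A · B (product)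
  | dia : Fm → Fm            -- ⟨⟩A
  | box : Fm → Fm            -- []⁻¹A

/-- Meta-formulas are lists of items; an item is a formula or a bracketed
meta-formula.  The comma is list append (hence associative with unit `[]`, the
empty meta-formula Λ). -/
inductive Item : Type
  | fm : Fm → Item
  | br : List Item → Item

/-- One-hole contexts Δ(·) in meta-formulas: the hole is a designated
occurrence of a sub-meta-formula, possibly under brackets. -/
inductive Ctx : Type
  | hole : List Item → List Item → Ctx
  | br : List Item → Ctx → List Item → Ctx

/-- Plugging a meta-formula into the hole of a context. -/
def Ctx.plug : Ctx → List Item → List Item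
  | .hole l r, Γ => l ++ Γ ++ r
  | .br l c r, Γ => l ++ Item.br (c.plug Γ) :: r

/-- Derivability in the Lambek calculus with brackets Lb* (no unit rules). -/
inductive LbS : List Item → Fm → Prop
  | ax (p : ℕ) : LbS [.fm (.var p)] (.var p)
  | ldiv_l (Γ : List Item) (Δ : Ctx) (A B C : Fm) :
      LbS Γ A → LbS (Δ.plug [.fm B]) C → LbS (Δ.plug (Γ ++ [.fm (.ldiv A B)])) C
  | ldiv_r (Γ : List Item) (A B : Fm) :
      LbS (.fm A :: Γ) B → LbS Γ (.ldiv A B)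
  | rdiv_l (Γ : List Item) (Δ : Ctx) (A B C : Fm) :
      LbS Γ A → LbS (Δ.plug [.fm B]) C → LbS (Δ.plug (.fm (.rdiv B A) :: Γ)) C
  | rdiv_r (Γ : List Item) (A B : Fm) :
      LbS (Γ ++ [.fm A]) B → LbS Γ (.rdiv B A)
  | mul_l (Δ : Ctx) (A B C : Fm) :
      LbS (Δ.plug [.fm A, .fm B]) C → LbS (Δ.plug [.fm (.mul A B)]) C
  | mul_r (Γ Θ : List Item) (A B : Fm) :
      LbS Γ A → LbS Θ B → LbS (Γ ++ Θ) (.mul A B)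
  | dia_l (Δ : Ctx) (A C : Fm) :
      LbS (Δ.plug [.br [.fm A]]) C → LbS (Δ.plug [.fm (.dia A)]) C
  | dia_r (Γ : List Item) (A : Fm) :
      LbS Γ A → LbS [.br Γ] (.dia A)
  | box_l (Δ : Ctx) (A C : Fm) :
      LbS (Δ.plug [.fm A]) C → LbS (Δ.plug [.br [.fm (.box A)]]) C
  | box_r (Γ : List Item) (A : Fm) :
      LbS [.br Γ] A → LbS Γ (.box A)

/-- Derivability in the Lambek calculus with brackets and the unit, Lb*₁. -/
inductive Lb1 : List Item → Fm → Prop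
  | ax (p : ℕ) : Lb1 [.fm (.var p)] (.var p)
  | ldiv_l (Γ : List Item) (Δ : Ctx) (A B C : Fm) :
      Lb1 Γ A → Lb1 (Δ.plug [.fm B]) C → Lb1 (Δ.plug (Γ ++ [.fm (.ldiv A B)])) C
  | ldiv_r (Γ : List Item) (A B : Fm) :
      Lb1 (.fm A :: Γ) B → Lb1 Γ (.ldiv A B)
  | rdiv_l (Γ : List Item) (Δ : Ctx) (A B C : Fm) :
      Lb1 Γ A → Lb1 (Δ.plug [.fm B]) C → Lb1 (Δ.plug (.fm (.rdiv B A) :: Γ)) C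
  | rdiv_r (Γ : List Item) (A B : Fm) :
      Lb1 (Γ ++ [.fm A]) B → Lb1 Γ (.rdiv B A)
  | mul_l (Δ : Ctx) (A B C : Fm) :
      Lb1 (Δ.plug [.fm A, .fm B]) C → Lb1 (Δ.plug [.fm (.mul A B)]) C
  | mul_r (Γ Θ : List Item) (A B : Fm) :
      Lb1 Γ A → Lb1 Θ B → Lb1 (Γ ++ Θ) (.mul A B)
  | dia_l (Δ : Ctx) (A C : Fm) :
      Lb1 (Δ.plug [.br [.fm A]]) C → Lb1 (Δ.plug [.fm (.dia A)]) C
  | dia_r (Γ : List Item) (A : Fm) :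
      Lb1 Γ A → Lb1 [.br Γ] (.dia A)
  | box_l (Δ : Ctx) (A C : Fm) :
      Lb1 (Δ.plug [.fm A]) C → Lb1 (Δ.plug [.br [.fm (.box A)]]) C
  | box_r (Γ : List Item) (A : Fm) :
      Lb1 [.br Γ] A → Lb1 Γ (.box A)
  | one_l (Δ : Ctx) (C : Fm) :
      Lb1 (Δ.plug []) C → Lb1 (Δ.plug [.fm .one]) C
  | one_r : Lb1 [] .one

/-- `ones n` is the meta-formula 𝟏ⁿ = 𝟏, 𝟏, …, 𝟏 (n times). -/
def ones (n : ℕ) : List Item := List.replicate n (.fm .one)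

/-- Derivability in the modified calculus Lb*₁′: the rule (𝟏→) is removed and
the axioms (→𝟏), (ax) and the rules (→⟨⟩), ([]⁻¹→) are replaced by their
primed versions; all other rules of Lb*₁ are kept intact. -/
inductive Lb1' : List Item → Fm → Prop
  | ax' (k m p : ℕ) :
      Lb1' (ones k ++ .fm (.var p) :: ones m) (.var p)
  | one_r' (k : ℕ) : Lb1' (ones k) .one
  | ldiv_l (Γ : List Item) (Δ : Ctx) (A B C : Fm) :
      Lb1' Γ A → Lb1' (Δ.plug [.fm B]) C → Lb1' (Δ.plug (Γ ++ [.fm (.ldiv A B)])) C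
  | ldiv_r (Γ : List Item) (A B : Fm) :
      Lb1' (.fm A :: Γ) B → Lb1' Γ (.ldiv A B)
  | rdiv_l (Γ : List Item) (Δ : Ctx) (A B C : Fm) :
      Lb1' Γ A → Lb1' (Δ.plug [.fm B]) C → Lb1' (Δ.plug (.fm (.rdiv B A) :: Γ)) C
  | rdiv_r (Γ : List Item) (A B : Fm) :
      Lb1' (Γ ++ [.fm A]) B → Lb1' Γ (.rdiv B A)
  | mul_l (Δ : Ctx) (A B C : Fm) :
      Lb1' (Δ.plug [.fm A, .fm B]) C → Lb1' (Δ.plug [.fm (.mul A B)]) C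
  | mul_r (Γ Θ : List Item) (A B : Fm) :
      Lb1' Γ A → Lb1' Θ B → Lb1' (Γ ++ Θ) (.mul A B)
  | dia_l (Δ : Ctx) (A C : Fm) :
      Lb1' (Δ.plug [.br [.fm A]]) C → Lb1' (Δ.plug [.fm (.dia A)]) C
  | dia_r' (k m : ℕ) (Γ : List Item) (A : Fm) :
      Lb1' Γ (.dia A) → Lb1' (ones k ++ .br Γ :: ones m) (.dia A)
  | box_l' (k m : ℕ) (Δ : Ctx) (B C : Fm) :
      Lb1' (Δ.plug [.fm B]) C →
      Lb1' (Δ.plug [.br (ones k ++ .fm (.box B) :: ones m)]) C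
  | box_r (Γ : List Item) (A : Fm) :
      Lb1' [.br Γ] A → Lb1' Γ (.box A)

/-- The formula q \ q. -/
def qq (q : ℕ) : Fm := .ldiv (.var q) (.var q)

mutual
/-- The translation τ⁺ (for positive occurrences), with distinguished variable q. -/
def tauP (q : ℕ) : Fm → Fm
  | .one => qq q
  | .var p => .mul (.mul (qq q) (.var p)) (qq q)
  | .ldiv A B => .ldiv (tauM q A) (tauP q B)
  | .rdiv B A => .rdiv (tauP q B) (tauP q A)
  | .mul A B => .mul (tauP q A) (tauP q B)
  | .dia A => .mul (.mul (qq q) (.dia (tauP q A))) (qq q)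
  | .box A => .box (tauM q A)
/-- The translation τ⁻ (for negative occurrences), with distinguished variable q. -/
def tauM (q : ℕ) : Fm → Fm
  | .one => qq q
  | .var p => .var p
  | .ldiv A B => .ldiv (tauM q A) (tauM q B)
  | .rdiv B A => .rdiv (tauM q B) (tauP q A)
  | .mul A B => .mul (tauM q A) (tauM q B)
  | .dia A => .dia (tauM q A)
  | .box A => .ldiv (qq q) (.rdiv (.box (tauM q A)) (qq q))
end

mutual
/-- τ⁻ on items of meta-formulas. -/
def tauItem (q : ℕ) : Item → Item
  | .fm A => .fm (tauM q A)
  | .br Γ => .br (tauMeta q Γ)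
/-- τ⁻ on meta-formulas. -/
def tauMeta (q : ℕ) : List Item → List Item
  | [] => []
  | i :: Γ => tauItem q i :: tauMeta q Γ
end

/-- The variable q does not occur in a formula. -/
def Fm.qFree (q : ℕ) : Fm → Prop
  | .var p => p ≠ q
  | .one => True
  | .ldiv A B => A.qFree q ∧ B.qFree q
  | .rdiv B A => B.qFree q ∧ A.qFree q
  | .mul A B => A.qFree q ∧ B.qFree q
  | .dia A => A.qFree q
  | .box A => A.qFree q

mutual
/-- The variable q does not occur in an item. -/
def Item.qFree (q : ℕ) : Item → Prop
  | .fm A => A.qFree q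
  | .br Γ => MetaQFree q Γ
/-- The variable q does not occur in a meta-formula. -/
def MetaQFree (q : ℕ) : List Item → Prop
  | [] => True
  | i :: Γ => i.qFree q ∧ MetaQFree q Γ
end

/-- Substitution of the formula E for the variable q in a formula (the unit
constant is not affected). -/
def Fm.subst (q : ℕ) (E : Fm) : Fm → Fm
  | .var p => if p = q then E else .var p
  | .one => .one
  | .ldiv A B => .ldiv (Fm.subst q E A) (Fm.subst q E B)
  | .rdiv B A => .rdiv (Fm.subst q E B) (Fm.subst q E A)
  | .mul A B => .mul (Fm.subst q E A) (Fm.subst q E B)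
  | .dia A => .dia (Fm.subst q E A)
  | .box A => .box (Fm.subst q E A)

mutual
/-- Substitution of E for the variable q in an item. -/
def Item.subst (q : ℕ) (E : Fm) : Item → Item
  | .fm A => .fm (Fm.subst q E A)
  | .br Γ => .br (Meta.subst q E Γ)
/-- Substitution of E for the variable q in a meta-formula. -/
def Meta.subst (q : ℕ) (E : Fm) : List Item → List Item
  | [] => []
  | i :: Γ => Item.subst q E i :: Meta.subst q E Γ
end

/-- A formula contains no occurrence of the unit constant (i.e. it is an
Lb*-formula). -/
def Fm.unitFree : Fm → Prop
  | .var _ => True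
  | .one => False
  | .ldiv A B => A.unitFree ∧ B.unitFree
  | .rdiv B A => B.unitFree ∧ A.unitFree
  | .mul A B => A.unitFree ∧ B.unitFree
  | .dia A => A.unitFree
  | .box A => A.unitFree

mutual
/-- The yield of an item: erase all brackets. -/
def Item.yield : Item → List Fm
  | .fm A => [A]
  | .br Γ => yieldMeta Γ
/-- The yield of a meta-formula: the list of its formulas, with all brackets erased. -/
def yieldMeta : List Item → List Fm
  | [] => []
  | i :: Γ => i.yield ++ yieldMeta Γ
end

/-- A categorial grammar over the alphabet α: a lexical relation ▷ between
letters and formulas, and a target formula H. -/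
structure Grammar (α : Type) where
  rel : α → Fm → Prop
  target : Fm

/-- The lexical relation of the grammar is finite. -/
def Grammar.Finite {α : Type} (G : Grammar α) : Prop :=
  {p : α × Fm | G.rel p.1 p.2}.Finite

/-- The grammar is an Lb*-grammar: no occurrence of the unit constant. -/
def Grammar.UnitFree {α : Type} (G : Grammar α) : Prop :=
  G.target.unitFree ∧ ∀ a A, G.rel a A → A.unitFree

/-- The variable q does not occur in the grammar. -/
def Grammar.AvoidsVar {α : Type} (q : ℕ) (G : Grammar α) : Prop :=
  G.target.qFree q ∧ ∀ a A, G.rel a A → A.qFree q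

/-- The translated grammar: τ⁻ applied to all formulas in the lexical
relation and τ⁺ to the target formula. -/
def Grammar.translate {α : Type} (q : ℕ) (G : Grammar α) : Grammar α :=
  ⟨fun a A => ∃ B, G.rel a B ∧ A = tauM q B, tauP q G.target⟩

/-- The language t-generated by a grammar, relative to a derivability
relation D: a word a₁…aₙ is t-accepted if aᵢ ▷ Aᵢ for some formulas Aᵢ and
some meta-formula Γ with yield A₁,…,Aₙ is derivably mapped to the target. -/
def tLang {α : Type} (D : List Item → Fm → Prop) (G : Grammar α) : Set (List α) :=
  {w | ∃ As : List Fm, List.Forall₂ G.rel w As ∧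
        ∃ Γ : List Item, D Γ G.target ∧ yieldMeta Γ = As}

/-- The language s-generated by a grammar, relative to a derivability
relation D: a word a₁…aₙ is s-accepted if aᵢ ▷ Aᵢ for some formulas Aᵢ such
that the bracket-free sequent A₁,…,Aₙ → H is derivable. -/
def sLang {α : Type} (D : List Item → Fm → Prop) (G : Grammar α) : Set (List α) :=
  {w | ∃ As : List Fm, List.Forall₂ G.rel w As ∧ D (As.map Item.fm) G.target}


namespace CutAux

/-- Height-indexed version of Lb1. -/
inductive Lb1N : ℕ → List Item → Fm → Prop
  | ax (n p : ℕ) : Lb1N (n+1) [.fm (.var p)] (.var p)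
  | ldiv_l (n : ℕ) (Γ : List Item) (Δ : Ctx) (A B C : Fm) :
      Lb1N n Γ A → Lb1N n (Δ.plug [.fm B]) C → Lb1N (n+1) (Δ.plug (Γ ++ [.fm (.ldiv A B)])) C
  | ldiv_r (n : ℕ) (Γ : List Item) (A B : Fm) :
      Lb1N n (.fm A :: Γ) B → Lb1N (n+1) Γ (.ldiv A B)
  | rdiv_l (n : ℕ) (Γ : List Item) (Δ : Ctx) (A B C : Fm) :
      Lb1N n Γ A → Lb1N n (Δ.plug [.fm B]) C → Lb1N (n+1) (Δ.plug (.fm (.rdiv B A) :: Γ)) C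
  | rdiv_r (n : ℕ) (Γ : List Item) (A B : Fm) :
      Lb1N n (Γ ++ [.fm A]) B → Lb1N (n+1) Γ (.rdiv B A)
  | mul_l (n : ℕ) (Δ : Ctx) (A B C : Fm) :
      Lb1N n (Δ.plug [.fm A, .fm B]) C → Lb1N (n+1) (Δ.plug [.fm (.mul A B)]) C
  | mul_r (n : ℕ) (Γ Θ : List Item) (A B : Fm) :
      Lb1N n Γ A → Lb1N n Θ B → Lb1N (n+1) (Γ ++ Θ) (.mul A B)
  | dia_l (n : ℕ) (Δ : Ctx) (A C : Fm) :
      Lb1N n (Δ.plug [.br [.fm A]]) C → Lb1N (n+1) (Δ.plug [.fm (.dia A)]) C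
  | dia_r (n : ℕ) (Γ : List Item) (A : Fm) :
      Lb1N n Γ A → Lb1N (n+1) [.br Γ] (.dia A)
  | box_l (n : ℕ) (Δ : Ctx) (A C : Fm) :
      Lb1N n (Δ.plug [.fm A]) C → Lb1N (n+1) (Δ.plug [.br [.fm (.box A)]]) C
  | box_r (n : ℕ) (Γ : List Item) (A : Fm) :
      Lb1N n [.br Γ] A → Lb1N (n+1) Γ (.box A)
  | one_l (n : ℕ) (Δ : Ctx) (C : Fm) :
      Lb1N n (Δ.plug []) C → Lb1N (n+1) (Δ.plug [.fm .one]) C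
  | one_r (n : ℕ) : Lb1N (n+1) [] .one

theorem Lb1N.mono {n : ℕ} {Γ : List Item} {A : Fm} (h : Lb1N n Γ A) : Lb1N (n+1) Γ A := by
  induction h with
  | ax n p => exact .ax _ p
  | ldiv_l n Γ Δ A B C h1 h2 ih1 ih2 => exact .ldiv_l _ _ _ _ _ _ ih1 ih2
  | ldiv_r n Γ A B h ih => exact .ldiv_r _ _ _ _ ih
  | rdiv_l n Γ Δ A B C h1 h2 ih1 ih2 => exact .rdiv_l _ _ _ _ _ _ ih1 ih2
  | rdiv_r n Γ A B h ih => exact .rdiv_r _ _ _ _ ih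
  | mul_l n Δ A B C h ih => exact .mul_l _ _ _ _ _ ih
  | mul_r n Γ Θ A B h1 h2 ih1 ih2 => exact .mul_r _ _ _ _ _ ih1 ih2
  | dia_l n Δ A C h ih => exact .dia_l _ _ _ _ ih
  | dia_r n Γ A h ih => exact .dia_r _ _ _ ih
  | box_l n Δ A C h ih => exact .box_l _ _ _ _ ih
  | box_r n Γ A h ih => exact .box_r _ _ _ ih
  | one_l n Δ C h ih => exact .one_l _ _ _ ih
  | one_r n => exact .one_r _

theorem Lb1N.le_mono {n m : ℕ} (hnm : n ≤ m) {Γ : List Item} {A : Fm} (h : Lb1N n Γ A) :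
    Lb1N m Γ A := by
  induction hnm with
  | refl => exact h
  | step _ ih => exact ih.mono

theorem ofN {n : ℕ} {Γ : List Item} {A : Fm} (h : Lb1N n Γ A) : Lb1 Γ A := by
  induction h with
  | ax n p => exact .ax p
  | ldiv_l n Γ Δ A B C h1 h2 ih1 ih2 => exact .ldiv_l _ _ _ _ _ ih1 ih2
  | ldiv_r n Γ A B h ih => exact .ldiv_r _ _ _ ih
  | rdiv_l n Γ Δ A B C h1 h2 ih1 ih2 => exact .rdiv_l _ _ _ _ _ ih1 ih2
  | rdiv_r n Γ A B h ih => exact .rdiv_r _ _ _ ih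
  | mul_l n Δ A B C h ih => exact .mul_l _ _ _ _ ih
  | mul_r n Γ Θ A B h1 h2 ih1 ih2 => exact .mul_r _ _ _ _ ih1 ih2
  | dia_l n Δ A C h ih => exact .dia_l _ _ _ ih
  | dia_r n Γ A h ih => exact .dia_r _ _ ih
  | box_l n Δ A C h ih => exact .box_l _ _ _ ih
  | box_r n Γ A h ih => exact .box_r _ _ ih
  | one_l n Δ C h ih => exact .one_l _ _ ih
  | one_r n => exact .one_r

theorem toN {Γ : List Item} {A : Fm} (h : Lb1 Γ A) : ∃ n, Lb1N n Γ A := by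
  induction h with
  | ax p => exact ⟨1, .ax 0 p⟩
  | ldiv_l Γ Δ A B C h1 h2 ih1 ih2 =>
      obtain ⟨n, d1⟩ := ih1; obtain ⟨m, d2⟩ := ih2
      exact ⟨max n m + 1, .ldiv_l _ _ _ _ _ _ (d1.le_mono (le_max_left n m))
        (d2.le_mono (le_max_right n m))⟩
  | ldiv_r Γ A B h ih => obtain ⟨n, d⟩ := ih; exact ⟨n+1, .ldiv_r _ _ _ _ d⟩
  | rdiv_l Γ Δ A B C h1 h2 ih1 ih2 =>
      obtain ⟨n, d1⟩ := ih1; obtain ⟨m, d2⟩ := ih2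
      exact ⟨max n m + 1, .rdiv_l _ _ _ _ _ _ (d1.le_mono (le_max_left n m))
        (d2.le_mono (le_max_right n m))⟩
  | rdiv_r Γ A B h ih => obtain ⟨n, d⟩ := ih; exact ⟨n+1, .rdiv_r _ _ _ _ d⟩
  | mul_l Δ A B C h ih => obtain ⟨n, d⟩ := ih; exact ⟨n+1, .mul_l _ _ _ _ _ d⟩
  | mul_r Γ Θ A B h1 h2 ih1 ih2 =>
      obtain ⟨n, d1⟩ := ih1; obtain ⟨m, d2⟩ := ih2
      exact ⟨max n m + 1, .mul_r _ _ _ _ _ (d1.le_mono (le_max_left n m))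
        (d2.le_mono (le_max_right n m))⟩
  | dia_l Δ A C h ih => obtain ⟨n, d⟩ := ih; exact ⟨n+1, .dia_l _ _ _ _ d⟩
  | dia_r Γ A h ih => obtain ⟨n, d⟩ := ih; exact ⟨n+1, .dia_r _ _ _ d⟩
  | box_l Δ A C h ih => obtain ⟨n, d⟩ := ih; exact ⟨n+1, .box_l _ _ _ _ d⟩
  | box_r Γ A h ih => obtain ⟨n, d⟩ := ih; exact ⟨n+1, .box_r _ _ _ d⟩
  | one_l Δ C h ih => obtain ⟨n, d⟩ := ih; exact ⟨n+1, .one_l _ _ _ d⟩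
  | one_r => exact ⟨1, .one_r 0⟩

/-- Size of a formula. -/
def fsize : Fm → ℕ
  | .var _ => 1
  | .one => 1
  | .ldiv A B => fsize A + fsize B + 1
  | .rdiv B A => fsize B + fsize A + 1
  | .mul A B => fsize A + fsize B + 1
  | .dia A => fsize A + 1
  | .box A => fsize A + 1

theorem fsize_pos (A : Fm) : 1 ≤ fsize A := by
  cases A <;> simp [fsize]

/-- Composition of contexts. -/
def ccomp : Ctx → Ctx → Ctx
  | .hole l r, .hole l' r' => .hole (l ++ l') (r' ++ r)
  | .hole l r, .br l' c r' => .br (l ++ l') c (r' ++ r)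
  | .br l c r, c' => .br l (ccomp c c') r

theorem comp_plug (Δ Δ' : Ctx) (Γ : List Item) :
    (ccomp Δ Δ').plug Γ = Δ.plug (Δ'.plug Γ) := by
  induction Δ generalizing Γ with
  | hole l r => cases Δ' <;> simp [ccomp, Ctx.plug]
  | br l c r ih => simp [ccomp, Ctx.plug, ih]

/-- Extend a context by a list on the left. -/
def cextL (L : List Item) : Ctx → Ctx
  | .hole l r => .hole (L ++ l) r
  | .br l c r => .br (L ++ l) c r

theorem extL_plug (L : List Item) (Δ : Ctx) (Γ : List Item) :
    (cextL L Δ).plug Γ = L ++ Δ.plug Γ := by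
  cases Δ <;> simp [cextL, Ctx.plug]

/-- Extend a context by a list on the right. -/
def cextR (R : List Item) : Ctx → Ctx
  | .hole l r => .hole l (r ++ R)
  | .br l c r => .br l c (r ++ R)

theorem extR_plug (R : List Item) (Δ : Ctx) (Γ : List Item) :
    (cextR R Δ).plug Γ = Δ.plug Γ ++ R := by
  cases Δ <;> simp [cextR, Ctx.plug]

theorem plug_single_ne_nil (Δ : Ctx) (s : Item) : Δ.plug [s] ≠ [] := by
  cases Δ <;> simp [Ctx.plug]

end CutAux

namespace CutAux

theorem mid : ∀ (l X Y r : List Item) (i : Item), l ++ i :: r = X ++ Y →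
    (∃ r₁, X = l ++ i :: r₁ ∧ r = r₁ ++ Y) ∨ (∃ l₂, l = X ++ l₂ ∧ Y = l₂ ++ i :: r) := by
  intro l
  induction l with
  | nil =>
    intro X Y r i h
    cases X with
    | nil => right; exact ⟨[], rfl, by simpa using h.symm⟩
    | cons x X' =>
      left
      simp only [List.nil_append, List.cons_append, List.cons.injEq] at h
      exact ⟨X', by simp [h.1], h.2⟩
  | cons a l' ih =>
    intro X Y r i h
    cases X with
    | nil => right; exact ⟨a :: l', rfl, by simpa using h.symm⟩
    | cons x X' =>
      simp only [List.cons_append, List.cons.injEq] at h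
      rcases ih X' Y r i h.2 with ⟨r₁, hX, hr⟩ | ⟨l₂, hl, hY⟩
      · left; exact ⟨r₁, by rw [h.1, hX]; rfl, hr⟩
      · right; exact ⟨l₂, by rw [h.1, hl]; rfl, hY⟩

theorem splitApp (Δ : Ctx) (s : Item) (X Y : List Item) (h : Δ.plug [s] = X ++ Y) :
    (∃ Δₗ : Ctx, Δₗ.plug [s] = X ∧ ∀ Γ, Δ.plug Γ = Δₗ.plug Γ ++ Y) ∨
    (∃ Δᵣ : Ctx, Δᵣ.plug [s] = Y ∧ ∀ Γ, Δ.plug Γ = X ++ Δᵣ.plug Γ) := by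
  cases Δ with
  | hole l r =>
    rcases mid l X Y r s (by simpa [Ctx.plug] using h) with ⟨r₁, hX, hr⟩ | ⟨l₂, hl, hY⟩
    · left
      exact ⟨.hole l r₁, by simp [Ctx.plug, hX], fun Γ => by simp [Ctx.plug, hr]⟩
    · right
      exact ⟨.hole l₂ r, by simp [Ctx.plug, hY], fun Γ => by simp [Ctx.plug, hl]⟩
  | br l c r =>
    rcases mid l X Y r (.br (c.plug [s])) (by simpa [Ctx.plug] using h) with
      ⟨r₁, hX, hr⟩ | ⟨l₂, hl, hY⟩
    · left
      exact ⟨.br l c r₁, by simp [Ctx.plug, hX], fun Γ => by simp [Ctx.plug, hr]⟩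
    · right
      exact ⟨.br l₂ c r, by simp [Ctx.plug, hY], fun Γ => by simp [Ctx.plug, hl]⟩

theorem single (Δ : Ctx) (s i : Item) (h : Δ.plug [s] = [i]) :
    (s = i ∧ ∀ Γ, Δ.plug Γ = Γ) ∨
    (∃ c : Ctx, i = .br (c.plug [s]) ∧ ∀ Γ, Δ.plug Γ = [.br (c.plug Γ)]) := by
  cases Δ with
  | hole l r =>
    simp only [Ctx.plug] at h
    cases l with
    | cons a l' => simp only [List.cons_append, List.cons.injEq] at h
                   exact absurd h.2 (by simp)
    | nil =>
      simp only [List.nil_append, List.cons_append, List.cons.injEq] at h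
      left
      obtain ⟨rfl, hr⟩ := h
      have : r = [] := by simpa using hr
      subst this
      exact ⟨rfl, fun Γ => by simp [Ctx.plug]⟩
  | br l c r =>
    simp only [Ctx.plug] at h
    cases l with
    | cons a l' => simp only [List.cons_append, List.cons.injEq] at h
                   exact absurd h.2 (by simp)
    | nil =>
      simp only [List.nil_append, List.cons.injEq] at h
      right
      obtain ⟨hi, hr⟩ := h
      subst hr
      exact ⟨c, hi.symm, fun Γ => by simp [Ctx.plug]⟩

theorem splitCtx : ∀ (Δ' Δ : Ctx) (A : Fm) (Y : List Item),
    Δ.plug [.fm A] = Δ'.plug Y →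
    (∃ Δ₂ : Ctx, Δ₂.plug [.fm A] = Y ∧ ∀ Γ, Δ.plug Γ = Δ'.plug (Δ₂.plug Γ)) ∨
    (∃ D E : List Item → Ctx, (∀ Γ, (D Γ).plug Y = Δ.plug Γ) ∧
      (∀ Z, (E Z).plug [.fm A] = Δ'.plug Z) ∧
      (∀ Γ Z, (D Γ).plug Z = (E Z).plug Γ)) := by
  intro Δ'
  induction Δ' with
  | hole l r =>
    intro Δ A Y h
    rcases splitApp Δ (.fm A) l (Y ++ r) (by simpa [Ctx.plug, List.append_assoc] using h) with
      ⟨Δₗ, hX, hP⟩ | ⟨Δᵣ, hY, hP⟩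
    · right
      refine ⟨fun Γ => .hole (Δₗ.plug Γ) r, fun Z => cextR (Z ++ r) Δₗ,
        fun Γ => ?_, fun Z => ?_, fun Γ Z => ?_⟩
      · simp [Ctx.plug, hP Γ]
      · simp [Ctx.plug, extR_plug, hX]
      · simp [Ctx.plug, extR_plug]
    · rcases splitApp Δᵣ (.fm A) Y r hY with ⟨Δ₂, h2, hP2⟩ | ⟨Δᵣ', h2, hP2⟩
      · left
        exact ⟨Δ₂, h2, fun Γ => by simp [Ctx.plug, hP Γ, hP2 Γ]⟩
      · right
        refine ⟨fun Γ => .hole l (Δᵣ'.plug Γ), fun Z => cextL (l ++ Z) Δᵣ',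
          fun Γ => ?_, fun Z => ?_, fun Γ Z => ?_⟩
        · simp [Ctx.plug, hP Γ, hP2 Γ]
        · simp [Ctx.plug, extL_plug, h2]
        · simp [Ctx.plug, extL_plug]
  | br l c r ih =>
    intro Δ A Y h
    rcases splitApp Δ (.fm A) l (Item.br (c.plug Y) :: r)
        (by simpa [Ctx.plug] using h) with ⟨Δₗ, hX, hP⟩ | ⟨Δᵣ, hY, hP⟩
    · right
      refine ⟨fun Γ => .br (Δₗ.plug Γ) c r, fun Z => cextR (Item.br (c.plug Z) :: r) Δₗ,
        fun Γ => ?_, fun Z => ?_, fun Γ Z => ?_⟩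
      · simp [Ctx.plug, hP Γ]
      · simp [Ctx.plug, extR_plug, hX]
      · simp [Ctx.plug, extR_plug]
    · rcases splitApp Δᵣ (.fm A) [Item.br (c.plug Y)] r (by simpa using hY) with
        ⟨Δₘ, hm, hP2⟩ | ⟨Δᵣ', h2, hP2⟩
      · rcases single Δₘ (.fm A) (.br (c.plug Y)) hm with ⟨hs, _⟩ | ⟨c', hi, hP3⟩
        · exact absurd hs (by simp)
        · injection hi with hi'
          rcases ih c' A Y hi'.symm with ⟨Δ₂, h₂, hP4⟩ | ⟨D₀, E₀, p1, p2, p3⟩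
          · left
            refine ⟨Δ₂, h₂, fun Γ => ?_⟩
            simp [Ctx.plug, hP Γ, hP2 Γ, hP3 Γ, hP4 Γ]
          · right
            refine ⟨fun Γ => .br l (D₀ Γ) r, fun Z => .br l (E₀ Z) r,
              fun Γ => ?_, fun Z => ?_, fun Γ Z => ?_⟩
            · simp [Ctx.plug, p1 Γ, hP Γ, hP2 Γ, hP3 Γ]
            · simp [Ctx.plug, p2 Z]
            · simp [Ctx.plug, p3 Γ Z]
      · right
        refine ⟨fun Γ => .br l c (Δᵣ'.plug Γ), fun Z => cextL (l ++ [Item.br (c.plug Z)]) Δᵣ',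
          fun Γ => ?_, fun Z => ?_, fun Γ Z => ?_⟩
        · simp [Ctx.plug, hP Γ, hP2 Γ]
        · simp [Ctx.plug, extL_plug, h2]
        · simp [Ctx.plug, extL_plug]

end CutAux

namespace CutAux

theorem step2 (A : Fm) (Γ : List Item)
    (HΓ : Lb1 Γ A)
    (Hldiv : ∀ A₁ B₁ k Γ₁ (Δ' : Ctx) C, A = .ldiv A₁ B₁ →
      Lb1N k Γ₁ A₁ → Lb1N k (Δ'.plug [.fm B₁]) C → Lb1 (Δ'.plug (Γ₁ ++ Γ)) C)
    (Hrdiv : ∀ A₁ B₁ k Γ₁ (Δ' : Ctx) C, A = .rdiv B₁ A₁ →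
      Lb1N k Γ₁ A₁ → Lb1N k (Δ'.plug [.fm B₁]) C → Lb1 (Δ'.plug (Γ ++ Γ₁)) C)
    (Hmul : ∀ A₁ B₁ k (Δ' : Ctx) C, A = .mul A₁ B₁ →
      Lb1N k (Δ'.plug [.fm A₁, .fm B₁]) C → Lb1 (Δ'.plug Γ) C)
    (Hdia : ∀ A₁ k (Δ' : Ctx) C, A = .dia A₁ →
      Lb1N k (Δ'.plug [.br [.fm A₁]]) C → Lb1 (Δ'.plug Γ) C)
    (Hbox : ∀ B₁ k (Δ' : Ctx) C, A = .box B₁ →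
      Lb1N k (Δ'.plug [.fm B₁]) C → Lb1 (Δ'.plug [.br Γ]) C)
    (Hone : ∀ k (Δ' : Ctx) C, A = .one →
      Lb1N k (Δ'.plug []) C → Lb1 (Δ'.plug Γ) C) :
    ∀ (n₂ : ℕ) (S : List Item) (Δ : Ctx) (C : Fm),
      Δ.plug [.fm A] = S → Lb1N n₂ S C → Lb1 (Δ.plug Γ) C := by
  intro n₂
  induction n₂ with
  | zero => intro S Δ C hE h2; exact absurd h2 (by intro h; cases h)
  | succ n ih =>
    intro S Δ C hE h2
    cases h2 with
    | ax k p =>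
      rcases single Δ _ _ hE with ⟨hs, hP⟩ | ⟨c, hi, _⟩
      · injection hs with hA
        rw [hP Γ]; rw [hA] at HΓ; exact HΓ
      · exact absurd hi (by simp)
    | one_r k => exact absurd hE (plug_single_ne_nil Δ _)
    | ldiv_r k Γ₂ A₁ B₁ hp =>
      have c1 := ih (.fm A₁ :: S) (cextL [.fm A₁] Δ) B₁ (by rw [extL_plug, hE]; rfl) hp
      rw [extL_plug] at c1
      exact Lb1.ldiv_r _ A₁ B₁ c1
    | rdiv_r k Γ₂ A₁ B₁ hp =>
      have c1 := ih (S ++ [.fm A₁]) (cextR [.fm A₁] Δ) B₁ (by rw [extR_plug, hE]) hp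
      rw [extR_plug] at c1
      exact Lb1.rdiv_r _ A₁ B₁ c1
    | mul_r k Γ₂ Θ₂ A₁ B₁ h₁ h₂ =>
      rcases splitApp Δ (.fm A) Γ₂ Θ₂ hE with ⟨Δₗ, hX, hP⟩ | ⟨Δᵣ, hY, hP⟩
      · have c1 := ih Γ₂ Δₗ A₁ hX h₁
        rw [hP Γ]
        exact Lb1.mul_r _ Θ₂ A₁ B₁ c1 (ofN h₂)
      · have c1 := ih Θ₂ Δᵣ B₁ hY h₂
        rw [hP Γ]
        exact Lb1.mul_r Γ₂ _ A₁ B₁ (ofN h₁) c1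
    | dia_r k Γ₂ A₁ hp =>
      rcases single Δ _ _ hE with ⟨hs, _⟩ | ⟨c, hi, hP⟩
      · exact absurd hs (by simp)
      · injection hi with hi'
        have c1 := ih Γ₂ c A₁ hi'.symm hp
        rw [hP Γ]
        exact Lb1.dia_r _ A₁ c1
    | box_r k Γ₂ A₁ hp =>
      have c1 := ih [.br S] (.br [] Δ []) A₁ (by simp [Ctx.plug, hE]) hp
      simp [Ctx.plug] at c1
      exact Lb1.box_r _ A₁ c1
    | ldiv_l k Γ₁ Δ' A₁ B₁ C' hm hp =>
      rcases splitCtx Δ' Δ A _ hE with ⟨Δ₂, h₂, hP⟩ | ⟨D, E, p1, p2, p3⟩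
      · rcases splitApp Δ₂ (.fm A) Γ₁ [.fm (.ldiv A₁ B₁)] h₂ with
          ⟨Δₗ, hX, hP2⟩ | ⟨Δᵣ, hY, hP2⟩
        · have c1 := ih Γ₁ Δₗ A₁ hX hm
          rw [hP Γ, hP2 Γ]
          exact Lb1.ldiv_l _ Δ' A₁ B₁ _ c1 (ofN hp)
        · rcases single Δᵣ _ _ hY with ⟨hs, hPr⟩ | ⟨c, hi, _⟩
          · injection hs with hA
            rw [hP Γ, hP2 Γ, hPr Γ]
            exact Hldiv A₁ B₁ n Γ₁ Δ' _ hA hm hp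
          · exact absurd hi (by simp)
      · have c1 := ih (Δ'.plug [.fm B₁]) (E [.fm B₁]) _ (p2 _) hp
        rw [← p3] at c1
        have c2 := Lb1.ldiv_l Γ₁ (D Γ) A₁ B₁ _ (ofN hm) c1
        rwa [p1] at c2
    | rdiv_l k Γ₁ Δ' A₁ B₁ C' hm hp =>
      rcases splitCtx Δ' Δ A _ hE with ⟨Δ₂, h₂, hP⟩ | ⟨D, E, p1, p2, p3⟩
      · rcases splitApp Δ₂ (.fm A) [.fm (.rdiv B₁ A₁)] Γ₁ h₂ with
          ⟨Δₗ, hX, hP2⟩ | ⟨Δᵣ, hY, hP2⟩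
        · rcases single Δₗ _ _ hX with ⟨hs, hPr⟩ | ⟨c, hi, _⟩
          · injection hs with hA
            rw [hP Γ, hP2 Γ, hPr Γ]
            exact Hrdiv A₁ B₁ n Γ₁ Δ' _ hA hm hp
          · exact absurd hi (by simp)
        · have c1 := ih Γ₁ Δᵣ A₁ hY hm
          rw [hP Γ, hP2 Γ]
          exact Lb1.rdiv_l _ Δ' A₁ B₁ _ c1 (ofN hp)
      · have c1 := ih (Δ'.plug [.fm B₁]) (E [.fm B₁]) _ (p2 _) hp
        rw [← p3] at c1
        have c2 := Lb1.rdiv_l Γ₁ (D Γ) A₁ B₁ _ (ofN hm) c1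
        rwa [p1] at c2
    | mul_l k Δ' A₁ B₁ C' hp =>
      rcases splitCtx Δ' Δ A _ hE with ⟨Δ₂, h₂, hP⟩ | ⟨D, E, p1, p2, p3⟩
      · rcases single Δ₂ _ _ h₂ with ⟨hs, hPr⟩ | ⟨c, hi, _⟩
        · injection hs with hA
          rw [hP Γ, hPr Γ]
          exact Hmul A₁ B₁ n Δ' _ hA hp
        · exact absurd hi (by simp)
      · have c1 := ih (Δ'.plug [.fm A₁, .fm B₁]) (E [.fm A₁, .fm B₁]) _ (p2 _) hp
        rw [← p3] at c1
        have c2 := Lb1.mul_l (D Γ) A₁ B₁ _ c1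
        rwa [p1] at c2
    | dia_l k Δ' A₁ C' hp =>
      rcases splitCtx Δ' Δ A _ hE with ⟨Δ₂, h₂, hP⟩ | ⟨D, E, p1, p2, p3⟩
      · rcases single Δ₂ _ _ h₂ with ⟨hs, hPr⟩ | ⟨c, hi, _⟩
        · injection hs with hA
          rw [hP Γ, hPr Γ]
          exact Hdia A₁ n Δ' _ hA hp
        · exact absurd hi (by simp)
      · have c1 := ih (Δ'.plug [.br [.fm A₁]]) (E [.br [.fm A₁]]) _ (p2 _) hp
        rw [← p3] at c1
        have c2 := Lb1.dia_l (D Γ) A₁ _ c1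
        rwa [p1] at c2
    | box_l k Δ' B₁ C' hp =>
      rcases splitCtx Δ' Δ A _ hE with ⟨Δ₂, h₂, hP⟩ | ⟨D, E, p1, p2, p3⟩
      · rcases single Δ₂ _ _ h₂ with ⟨hs, _⟩ | ⟨c, hi, hPr⟩
        · exact absurd hs (by simp)
        · injection hi with hi'
          rcases single c _ _ hi'.symm with ⟨hs2, hPc⟩ | ⟨c2, hi2, _⟩
          · injection hs2 with hA
            rw [hP Γ, hPr Γ, hPc Γ]
            exact Hbox B₁ n Δ' _ hA hp
          · exact absurd hi2 (by simp)
      · have c1 := ih (Δ'.plug [.fm B₁]) (E [.fm B₁]) _ (p2 _) hp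
        rw [← p3] at c1
        have c2 := Lb1.box_l (D Γ) B₁ _ c1
        rwa [p1] at c2
    | one_l k Δ' C' hp =>
      rcases splitCtx Δ' Δ A _ hE with ⟨Δ₂, h₂, hP⟩ | ⟨D, E, p1, p2, p3⟩
      · rcases single Δ₂ _ _ h₂ with ⟨hs, hPr⟩ | ⟨c, hi, _⟩
        · injection hs with hA
          rw [hP Γ, hPr Γ]
          exact Hone n Δ' _ hA hp
        · exact absurd hi (by simp)
      · have c1 := ih (Δ'.plug []) (E []) _ (p2 _) hp
        rw [← p3] at c1
        have c2 := Lb1.one_l (D Γ) _ c1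
        rwa [p1] at c2

end CutAux

namespace CutAux

theorem cutMain : ∀ (a : ℕ) (A : Fm), fsize A ≤ a → ∀ (n₁ : ℕ) (Γ : List Item),
    Lb1N n₁ Γ A → ∀ (Δ : Ctx) (C : Fm) (n₂ : ℕ),
    Lb1N n₂ (Δ.plug [.fm A]) C → Lb1 (Δ.plug Γ) C := by
  intro a
  induction a with
  | zero => intro A hA; exact absurd hA (by have := fsize_pos A; omega)
  | succ a iha =>
    intro A hA n₁
    induction n₁ with
    | zero => intro Γ h1; exact absurd h1 (by intro h; cases h)
    | succ n₁ ih1 =>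
      intro Γ h1 Δ C n₂ h2
      cases h1 with
      | ax k p => exact ofN h2
      | ldiv_l k Γ' Δ₁ A₁ B₁ C' hm hp =>
        have c1 := ih1 _ hp Δ C n₂ h2
        rw [← comp_plug] at c1
        have c2 := Lb1.ldiv_l Γ' (ccomp Δ Δ₁) A₁ B₁ C (ofN hm) c1
        rwa [comp_plug] at c2
      | rdiv_l k Γ' Δ₁ A₁ B₁ C' hm hp =>
        have c1 := ih1 _ hp Δ C n₂ h2
        rw [← comp_plug] at c1
        have c2 := Lb1.rdiv_l Γ' (ccomp Δ Δ₁) A₁ B₁ C (ofN hm) c1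
        rwa [comp_plug] at c2
      | mul_l k Δ₁ A₁ B₁ C' hp =>
        have c1 := ih1 _ hp Δ C n₂ h2
        rw [← comp_plug] at c1
        have c2 := Lb1.mul_l (ccomp Δ Δ₁) A₁ B₁ C c1
        rwa [comp_plug] at c2
      | dia_l k Δ₁ A₁ C' hp =>
        have c1 := ih1 _ hp Δ C n₂ h2
        rw [← comp_plug] at c1
        have c2 := Lb1.dia_l (ccomp Δ Δ₁) A₁ C c1
        rwa [comp_plug] at c2
      | box_l k Δ₁ A₁ C' hp =>
        have c1 := ih1 _ hp Δ C n₂ h2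
        rw [← comp_plug] at c1
        have c2 := Lb1.box_l (ccomp Δ Δ₁) A₁ C c1
        rwa [comp_plug] at c2
      | one_l k Δ₁ C' hp =>
        have c1 := ih1 _ hp Δ C n₂ h2
        rw [← comp_plug] at c1
        have c2 := Lb1.one_l (ccomp Δ Δ₁) C c1
        rwa [comp_plug] at c2
      | ldiv_r k Γ₂ A₀ B₀ hp =>
        refine step2 (.ldiv A₀ B₀) Γ (Lb1.ldiv_r Γ A₀ B₀ (ofN hp))
          ?_ ?_ ?_ ?_ ?_ ?_ n₂ _ Δ C rfl h2
        · intro A₁ B₁ k' Γ₁ Δ' C₀ heq hm hp2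
          injection heq with e1 e2; subst e1; subst e2
          have hp0 := fsize_pos A₀; have hp1 := fsize_pos B₀
          simp [fsize] at hA
          have c1 := iha A₀ (by omega) k' Γ₁ hm (Ctx.hole [] Γ) B₀ n₁
            (by simpa [Ctx.plug] using hp)
          simp [Ctx.plug] at c1
          obtain ⟨m, c1'⟩ := toN c1
          exact iha B₀ (by omega) m (Γ₁ ++ Γ) c1' Δ' C₀ k' hp2
        · intro _ _ _ _ _ _ heq; exact absurd heq (by simp)
        · intro _ _ _ _ _ heq; exact absurd heq (by simp)
        · intro _ _ _ _ heq; exact absurd heq (by simp)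
        · intro _ _ _ _ heq; exact absurd heq (by simp)
        · intro _ _ _ heq; exact absurd heq (by simp)
      | rdiv_r k Γ₂ A₀ B₀ hp =>
        refine step2 (.rdiv B₀ A₀) Γ (Lb1.rdiv_r Γ A₀ B₀ (ofN hp))
          ?_ ?_ ?_ ?_ ?_ ?_ n₂ _ Δ C rfl h2
        · intro _ _ _ _ _ _ heq; exact absurd heq (by simp)
        · intro A₁ B₁ k' Γ₁ Δ' C₀ heq hm hp2
          injection heq with e1 e2; subst e1; subst e2
          have hp0 := fsize_pos A₀; have hp1 := fsize_pos B₀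
          simp [fsize] at hA
          have c1 := iha A₀ (by omega) k' Γ₁ hm (Ctx.hole Γ []) B₀ n₁
            (by simpa [Ctx.plug] using hp)
          simp [Ctx.plug] at c1
          obtain ⟨m, c1'⟩ := toN c1
          exact iha B₀ (by omega) m (Γ ++ Γ₁) c1' Δ' C₀ k' hp2
        · intro _ _ _ _ _ heq; exact absurd heq (by simp)
        · intro _ _ _ _ heq; exact absurd heq (by simp)
        · intro _ _ _ _ heq; exact absurd heq (by simp)
        · intro _ _ _ heq; exact absurd heq (by simp)
      | mul_r k Γ₀ Θ₀ A₀ B₀ h₁ h₂ =>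
        refine step2 (.mul A₀ B₀) (Γ₀ ++ Θ₀) (Lb1.mul_r Γ₀ Θ₀ A₀ B₀ (ofN h₁) (ofN h₂))
          ?_ ?_ ?_ ?_ ?_ ?_ n₂ _ Δ C rfl h2
        · intro _ _ _ _ _ _ heq; exact absurd heq (by simp)
        · intro _ _ _ _ _ _ heq; exact absurd heq (by simp)
        · intro A₁ B₁ k' Δ' C₀ heq hp2
          injection heq with e1 e2; subst e1; subst e2
          have hp0 := fsize_pos A₀; have hp1 := fsize_pos B₀
          simp [fsize] at hA
          have c1 := iha A₀ (by omega) n₁ Γ₀ h₁ (ccomp Δ' (.hole [] [.fm B₀])) C₀ k'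
            (by rw [comp_plug]; simpa [Ctx.plug] using hp2)
          rw [comp_plug] at c1
          simp [Ctx.plug] at c1
          obtain ⟨m, c1'⟩ := toN c1
          have c2 := iha B₀ (by omega) n₁ Θ₀ h₂ (ccomp Δ' (.hole Γ₀ [])) C₀ m
            (by rw [comp_plug]; simpa [Ctx.plug] using c1')
          rw [comp_plug] at c2
          simpa [Ctx.plug] using c2
        · intro _ _ _ _ heq; exact absurd heq (by simp)
        · intro _ _ _ _ heq; exact absurd heq (by simp)
        · intro _ _ _ heq; exact absurd heq (by simp)
      | dia_r k Γ₀ A₀ hp =>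
        refine step2 (.dia A₀) [.br Γ₀] (Lb1.dia_r Γ₀ A₀ (ofN hp))
          ?_ ?_ ?_ ?_ ?_ ?_ n₂ _ Δ C rfl h2
        · intro _ _ _ _ _ _ heq; exact absurd heq (by simp)
        · intro _ _ _ _ _ _ heq; exact absurd heq (by simp)
        · intro _ _ _ _ _ heq; exact absurd heq (by simp)
        · intro A₁ k' Δ' C₀ heq hp2
          injection heq with e1; subst e1
          simp [fsize] at hA
          have c1 := iha A₀ (by omega) n₁ Γ₀ hp (ccomp Δ' (.br [] (.hole [] []) [])) C₀ k'
            (by rw [comp_plug]; simpa [Ctx.plug] using hp2)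
          rw [comp_plug] at c1
          simpa [Ctx.plug] using c1
        · intro _ _ _ _ heq; exact absurd heq (by simp)
        · intro _ _ _ heq; exact absurd heq (by simp)
      | box_r k Γ₂ A₀ hp =>
        refine step2 (.box A₀) Γ (Lb1.box_r Γ A₀ (ofN hp))
          ?_ ?_ ?_ ?_ ?_ ?_ n₂ _ Δ C rfl h2
        · intro _ _ _ _ _ _ heq; exact absurd heq (by simp)
        · intro _ _ _ _ _ _ heq; exact absurd heq (by simp)
        · intro _ _ _ _ _ heq; exact absurd heq (by simp)
        · intro _ _ _ _ heq; exact absurd heq (by simp)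
        · intro B₁ k' Δ' C₀ heq hp2
          injection heq with e1; subst e1
          simp [fsize] at hA
          exact iha A₀ (by omega) n₁ [.br Γ] hp Δ' C₀ k' hp2
        · intro _ _ _ heq; exact absurd heq (by simp)
      | one_r k =>
        refine step2 .one [] Lb1.one_r ?_ ?_ ?_ ?_ ?_ ?_ n₂ _ Δ C rfl h2
        · intro _ _ _ _ _ _ heq; exact absurd heq (by simp)
        · intro _ _ _ _ _ _ heq; exact absurd heq (by simp)
        · intro _ _ _ _ _ heq; exact absurd heq (by simp)
        · intro _ _ _ _ heq; exact absurd heq (by simp)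
        · intro _ _ _ _ heq; exact absurd heq (by simp)
        · intro k' Δ' C₀ _ hp2; exact ofN hp2

end CutAux


/-- The cut rule is admissible in Lb*₁: if Γ → A and
Δ(A) → C are derivable in Lb*₁, then so is Δ(Γ) → C. -/
theorem cut_admissible_Lb1 (Γ : List Item) (Δ : Ctx) (A C : Fm)
    (h1 : Lb1 Γ A) (h2 : Lb1 (Δ.plug [.fm A]) C) :
    Lb1 (Δ.plug Γ) C := by
  obtain ⟨n₁, d1⟩ := CutAux.toN h1
  obtain ⟨n₂, d2⟩ := CutAux.toN h2
  exact CutAux.cutMain (CutAux.fsize A) A le_rfl n₁ Γ d1 Δ C n₂ d2
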